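/- If β ∈ (0,1] has continued fraction expansion [0;a_1,a_2,…] and ω_1(β)|_n is the Farey coding of β of length n, then the associated inverse branch is the Möbius map f_{1,ω_1(β)|_n}(x) = ((r(n)·p_{m(n)} + p_{m(n)-1})·x + p_{m(n)}) / ((r(n)·q_{m(n)} + q_{m(n)-1})·x + q_{m(n)}), where p_k, q_k are the continued fraction convergent numerators/denominators of β, m(n) is the number of indices ℓ ≤ n with T_1^{ℓ-1}(β) > 1/2, and r(n) = n - max{k ≤ n : T_1^{k-1}(β) > 1/2}. -/

import Mathlib

/-- The Farey map. -/
noncomputable def T1 (x : ℝ) : ℝ := if x ≤ 1/2 then x / (1 - x) else (1 - x) / x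

/-- Left inverse branch of the Farey map. -/
noncomputable def g0 (x : ℝ) : ℝ := x / (1 + x)

/-- Right inverse branch of the Farey map. -/
noncomputable def g1 (x : ℝ) : ℝ := 1 / (1 + x)

open scoped Classical in
/-- `F β n = f_{1,ω₁(β)|ₙ}`, the composition of the Farey inverse branches along the
coding of `β` (where `ω_{1,k}(β) = 1` iff `T₁^{k-1}(β) > 1/2`). -/
noncomputable def F (β : ℝ) : ℕ → ℝ → ℝ
  | 0 => id
  | n + 1 => F β n ∘ (if 1/2 < T1^[n] β then g1 else g0)

/-- Shifted continued fraction numerators: `P a 0 = p₋₁ = 1`, `P a (k+1) = p_k`,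
with `p_k = a_k p_{k-1} + p_{k-2}`. -/
def P (a : ℕ → ℕ) : ℕ → ℕ
  | 0 => 1
  | 1 => 0
  | n + 2 => a (n + 1) * P a (n + 1) + P a n

/-- Shifted continued fraction denominators: `Q a 0 = q₋₁ = 0`, `Q a (k+1) = q_k`,
with `q_k = a_k q_{k-1} + q_{k-2}`. -/
def Q (a : ℕ → ℕ) : ℕ → ℕ
  | 0 => 0
  | 1 => 1
  | n + 2 => a (n + 1) * Q a (n + 1) + Q a n

open scoped Classical in
/-- `m(n)`: the number of indices `ℓ ≤ n` with `T₁^{ℓ-1}(β) > 1/2`. -/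
noncomputable def mfun (β : ℝ) (n : ℕ) : ℕ :=
  ((Finset.Icc 1 n).filter (fun ℓ => 1/2 < T1^[ℓ - 1] β)).card

open scoped Classical in
/-- `k(n) = max {ℓ ≤ n : T₁^{ℓ-1}(β) > 1/2}` (with value `0` if no such index exists). -/
noncomputable def kfun (β : ℝ) (n : ℕ) : ℕ :=
  ((Finset.Icc 1 n).filter (fun ℓ => 1/2 < T1^[ℓ - 1] β)).sup id

/-- The Gauss map. -/
noncomputable def gauss (x : ℝ) : ℝ := 1/x - ⌊1/x⌋

/-- `β` has infinite continued fraction expansion `[0; a 1, a 2, …]`. -/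
def HasCF (β : ℝ) (a : ℕ → ℕ) : Prop :=
  ∀ k : ℕ, gauss^[k] β ∈ Set.Ioo (0:ℝ) 1 ∧ (a (k + 1) : ℝ) = ⌊1 / gauss^[k] β⌋

/-!
Since `β = [0; a₁, a₂, …]`, the Farey map spends `a₁ - 1` steps in the left branch and one step in
the right branch, then does the same with `a₂`, and so on: writing `y = 1 / G^m(β)` for the Gauss
map `G`, the orbit point `T₁ⁿ(β)` equals `1 / (y - r)`, with `m = m(n)` and `r = r(n) < a_{m+1}`,
and the right branch is taken exactly when `r + 1 = a_{m+1}`. Composing with a branch changes a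
Möbius map in the same way the recursion for `p_k, q_k` does: the left branch adds one to `r`, and
the right branch (only taken when `r + 1 = a_{m+1}`) passes from `(p_{m-1}, p_m)` to
`(p_m, p_{m+1})`.
-/

open Function

lemma T1_one_div_of_two_le {y : ℝ} (hy : 2 ≤ y) : T1 (1 / y) = 1 / (y - 1) := by
  have hy0 : y ≠ 0 := by positivity
  have hy1 : y - 1 ≠ 0 := by linarith
  rw [T1, if_pos (one_div_le_one_div_of_le two_pos hy)]
  field_simp

lemma T1_one_div_of_lt_two {y : ℝ} (hy0 : 0 < y) (hy : y < 2) : T1 (1 / y) = y - 1 := by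
  rw [T1, if_neg (not_le.mpr ((one_div_lt_one_div two_pos hy0).mpr hy))]
  field_simp

noncomputable def mobius (A B C D x : ℝ) : ℝ := (A * x + B) / (C * x + D)

lemma mobius_g0 (A B C D : ℝ) {x : ℝ} (hx : 1 + x ≠ 0) :
    mobius A B C D (g0 x) = mobius (A + B) B (C + D) D x := by
  rw [mobius, mobius, g0, ← mul_div_mul_right _ _ hx]
  congr 1 <;> field_simp <;> ring

lemma mobius_g1 (A B C D : ℝ) {x : ℝ} (hx : 1 + x ≠ 0) :
    mobius A B C D (g1 x) = mobius B (A + B) D (C + D) x := by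
  rw [mobius, mobius, g1, ← mul_div_mul_right _ _ hx]
  congr 1 <;> field_simp <;> ring

lemma g0_nonneg {x : ℝ} (hx : 0 ≤ x) : 0 ≤ g0 x := by unfold g0; positivity

lemma g1_nonneg {x : ℝ} (hx : 0 ≤ x) : 0 ≤ g1 x := by unfold g1; positivity

section Coding

variable (β : ℝ) (n : ℕ)

lemma F_succ_of_half_lt (h : 1 / 2 < T1^[n] β) (x : ℝ) : F β (n + 1) x = F β n (g1 x) := by
  simp only [F, comp_apply, if_pos h]

lemma F_succ_of_not_half_lt (h : ¬ 1 / 2 < T1^[n] β) (x : ℝ) :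
    F β (n + 1) x = F β n (g0 x) := by
  simp only [F, comp_apply, if_neg h]

lemma filter_Icc_succ :
    (Finset.Icc 1 (n + 1)).filter (fun ℓ => 1 / 2 < T1^[ℓ - 1] β) =
      if 1 / 2 < T1^[n] β then
        insert (n + 1) ((Finset.Icc 1 n).filter (fun ℓ => 1 / 2 < T1^[ℓ - 1] β))
      else (Finset.Icc 1 n).filter (fun ℓ => 1 / 2 < T1^[ℓ - 1] β) := by
  rw [← Finset.insert_Icc_right_eq_Icc_add_one (by omega), Finset.filter_insert]
  simp

@[simp] lemma mfun_zero : mfun β 0 = 0 := by simp [mfun]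

@[simp] lemma kfun_zero : kfun β 0 = 0 := by simp [kfun]

lemma kfun_le : kfun β n ≤ n :=
  Finset.sup_le fun _ hℓ => (Finset.mem_Icc.mp (Finset.mem_filter.mp hℓ).1).2

lemma mfun_succ_of_half_lt (h : 1 / 2 < T1^[n] β) : mfun β (n + 1) = mfun β n + 1 := by
  rw [mfun, filter_Icc_succ, if_pos h, Finset.card_insert_of_notMem (by simp), mfun]

lemma mfun_succ_of_not_half_lt (h : ¬ 1 / 2 < T1^[n] β) : mfun β (n + 1) = mfun β n := by
  rw [mfun, filter_Icc_succ, if_neg h, mfun]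

lemma kfun_succ_of_half_lt (h : 1 / 2 < T1^[n] β) : kfun β (n + 1) = n + 1 := by
  rw [kfun, filter_Icc_succ, if_pos h, Finset.sup_insert, ← kfun]
  exact max_eq_left (kfun_le β n |>.trans n.le_succ)

lemma kfun_succ_of_not_half_lt (h : ¬ 1 / 2 < T1^[n] β) : kfun β (n + 1) = kfun β n := by
  rw [kfun, filter_Icc_succ, if_neg h, kfun]

lemma succ_sub_kfun_succ_of_not_half_lt (h : ¬ 1 / 2 < T1^[n] β) :
    n + 1 - kfun β (n + 1) = n - kfun β n + 1 := by
  rw [kfun_succ_of_not_half_lt β n h]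
  have := kfun_le β n
  omega

end Coding

lemma P_add_two (a : ℕ → ℕ) (k : ℕ) : P a (k + 1 + 1) = a (k + 1) * P a (k + 1) + P a k := rfl

lemma Q_add_two (a : ℕ → ℕ) (k : ℕ) : Q a (k + 1 + 1) = a (k + 1) * Q a (k + 1) + Q a k := rfl

namespace HasCF

variable {β : ℝ} {a : ℕ → ℕ}

lemma gauss_iterate_succ (ha : HasCF β a) (k : ℕ) :
    gauss^[k + 1] β = 1 / gauss^[k] β - a (k + 1) := by
  rw [iterate_succ_apply', gauss, (ha k).2]

lemma lt_one_div (ha : HasCF β a) (k : ℕ) : (a (k + 1) : ℝ) < 1 / gauss^[k] β := by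
  have := (ha (k + 1)).1.1
  rw [ha.gauss_iterate_succ] at this
  linarith

lemma one_div_lt (ha : HasCF β a) (k : ℕ) : 1 / gauss^[k] β < a (k + 1) + 1 := by
  rw [(ha k).2]
  exact Int.lt_floor_add_one _

lemma one_le (ha : HasCF β a) (k : ℕ) : 1 ≤ a (k + 1) := by
  obtain ⟨hg0, hg1⟩ := (ha k).1
  have hy : (1 : ℝ) ≤ 1 / gauss^[k] β := by rw [le_div_iff₀ hg0]; linarith
  have hfloor : (1 : ℤ) ≤ ⌊1 / gauss^[k] β⌋ := Int.le_floor.mpr (by simpa using hy)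
  have : (1 : ℝ) ≤ a (k + 1) := by rw [(ha k).2]; exact_mod_cast hfloor
  exact_mod_cast this

lemma one_lt_one_div_sub (ha : HasCF β a) {m r : ℕ} (hr : r < a (m + 1)) :
    1 < 1 / gauss^[m] β - r := by
  have : (r : ℝ) + 1 ≤ a (m + 1) := by exact_mod_cast hr
  linarith [ha.lt_one_div m]

lemma succ_eq_of_one_div_sub_lt_two (ha : HasCF β a) {m r : ℕ} (hr : r < a (m + 1))
    (hz : 1 / gauss^[m] β - r < 2) : r + 1 = a (m + 1) := by
  have : (a (m + 1) : ℝ) < r + 2 := by linarith [ha.lt_one_div m]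
  have : a (m + 1) < r + 2 := by exact_mod_cast this
  omega

lemma succ_lt_of_two_le_one_div_sub (ha : HasCF β a) {m r : ℕ}
    (hz : 2 ≤ 1 / gauss^[m] β - r) : r + 1 < a (m + 1) := by
  have : (r : ℝ) + 1 < a (m + 1) := by linarith [ha.one_div_lt m]
  exact_mod_cast this

theorem T1_iterate_eq (ha : HasCF β a) (n : ℕ) :
    T1^[n] β = 1 / (1 / gauss^[mfun β n] β - (n - kfun β n : ℕ)) ∧
      n - kfun β n < a (mfun β n + 1) := by
  induction n with
  | zero => simpa using Nat.succ_le_iff.mp (ha.one_le 0)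
  | succ n ih =>
    obtain ⟨hT, hr⟩ := ih
    have hz := ha.one_lt_one_div_sub hr
    have hT' : T1^[n + 1] β = T1 (1 / (1 / gauss^[mfun β n] β - (n - kfun β n : ℕ))) := by
      rw [iterate_succ_apply', hT]
    by_cases h : 1 / 2 < T1^[n] β
    · have hz2 : 1 / gauss^[mfun β n] β - (n - kfun β n : ℕ) < 2 := by
        rwa [hT, one_div_lt_one_div two_pos (by linarith)] at h
      have hra := ha.succ_eq_of_one_div_sub_lt_two hr hz2
      rw [hT', T1_one_div_of_lt_two (by linarith) hz2, mfun_succ_of_half_lt β n h,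
        kfun_succ_of_half_lt β n h, Nat.sub_self]
      refine ⟨?_, ha.one_le _⟩
      rw [Nat.cast_zero, sub_zero, one_div_one_div, ha.gauss_iterate_succ, ← hra]
      push_cast
      ring
    · have hz2 : 2 ≤ 1 / gauss^[mfun β n] β - (n - kfun β n : ℕ) := by
        rwa [hT, one_div_lt_one_div two_pos (by linarith), not_lt] at h
      rw [hT', T1_one_div_of_two_le hz2, mfun_succ_of_not_half_lt β n h,
        succ_sub_kfun_succ_of_not_half_lt β n h]
      refine ⟨?_, ha.succ_lt_of_two_le_one_div_sub hz2⟩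
      push_cast
      ring

lemma sub_kfun_add_one_eq_of_half_lt (ha : HasCF β a) {n : ℕ} (h : 1 / 2 < T1^[n] β) :
    n - kfun β n + 1 = a (mfun β n + 1) := by
  obtain ⟨hT, hr⟩ := ha.T1_iterate_eq n
  have hz := ha.one_lt_one_div_sub hr
  rw [hT, one_div_lt_one_div two_pos (by linarith)] at h
  exact ha.succ_eq_of_one_div_sub_lt_two hr h

end HasCF

theorem F_eq_mobius {β : ℝ} {a : ℕ → ℕ} (ha : HasCF β a) (n : ℕ) {x : ℝ} (hx : 0 ≤ x) :
    F β n x =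
      mobius ((n - kfun β n : ℕ) * P a (mfun β n + 1) + P a (mfun β n)) (P a (mfun β n + 1))
        ((n - kfun β n : ℕ) * Q a (mfun β n + 1) + Q a (mfun β n)) (Q a (mfun β n + 1)) x := by
  induction n generalizing x with
  | zero => simp [F, mobius, P, Q]
  | succ n ih =>
    have hx1 : 1 + x ≠ 0 := by positivity
    by_cases h : 1 / 2 < T1^[n] β
    · rw [F_succ_of_half_lt β n h, ih (g1_nonneg hx), mobius_g1 _ _ _ _ hx1,
        mfun_succ_of_half_lt β n h, kfun_succ_of_half_lt β n h, Nat.sub_self, P_add_two,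
        Q_add_two, ← ha.sub_kfun_add_one_eq_of_half_lt h]
      congr 1 <;> push_cast <;> ring
    · rw [F_succ_of_not_half_lt β n h, ih (g0_nonneg hx), mobius_g0 _ _ _ _ hx1,
        mfun_succ_of_not_half_lt β n h, succ_sub_kfun_succ_of_not_half_lt β n h]
      congr 1 <;> push_cast <;> ring

theorem stmt_7_general (β : ℝ) (a : ℕ → ℕ) (ha : HasCF β a)
    (n : ℕ) (x : ℝ) (hx : x ∈ Set.Icc (0:ℝ) 1) :
    F β n x =
      (((n - kfun β n : ℕ) * P a (mfun β n + 1) + P a (mfun β n) : ℝ) * x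
          + P a (mfun β n + 1)) /
      (((n - kfun β n : ℕ) * Q a (mfun β n + 1) + Q a (mfun β n) : ℝ) * x
          + Q a (mfun β n + 1)) :=
  F_eq_mobius ha n hx.1

theorem stmt_7 (β : ℝ) (hβ : β ∈ Set.Ioc (0:ℝ) 1) (a : ℕ → ℕ) (ha : HasCF β a)
    (n : ℕ) (x : ℝ) (hx : x ∈ Set.Icc (0:ℝ) 1) :
    F β n x =
      (((n - kfun β n : ℕ) * P a (mfun β n + 1) + P a (mfun β n) : ℝ) * x
          + P a (mfun β n + 1)) /
      (((n - kfun β n : ℕ) * Q a (mfun β n + 1) + Q a (mfun β n) : ℝ) * x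
          + Q a (mfun β n + 1)) :=
  stmt_7_general β a ha n x hx
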